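/- arXiv:math/0611526 — 4 statements merged into one kernel-verified Lean document; each statement's English description precedes it below -/
import Mathlib

section
/- In a Whittle network, the distribution π(n) = a·Φ(n)·∏_{i=1}^N ρ_i^{n_i} satisfies the partial balance equations π(n)Σ_{j∈I'} φ_{ij}(n) = Σ_{j∈I'} π(T_{ij}n)φ_{ji}(T_{ij}n) for every n ∈ ℤ₊^N and every i ∈ {0,1,...,N}, where (ρ_i) is any positive solution of the traffic equations ν = Σ_j ρ_j p_{j0} and ρ_i = Σ_j ρ_j p_{ji} + ν p_{0i} for all i ∈ {1,...,N}. -/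
/-!
Moving one customer into queue `l` multiplies the product-form weight `Φ(m) ∏ ρ^m` by
`ρ_l · Φ(m + e_l) / Φ(m)`, so the flow `π(m + e_l) φ_{li}(m + e_l)` of a transfer from `l`
to `i` equals `π(m) ρ_l p_{li}`. Summing over `l`, the total flow into queue `i` through the states
`m + e_j` is `π(m) (ν p_{0i} + Σ_l ρ_l p_{li})`, which is `π(m) ρ_i` (resp. `π(m) ν` for
`i = 0`) by the traffic equations; this is exactly the outflow `π(m + e_i) Σ_j φ_{ij}(m + e_i)`.
-/

open Finset

section ProductForm

variable {ι : Type*} [DecidableEq ι]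

theorem eq_zero_of_add_single_eq_zero (Φ : (ι → ℤ) → ℝ)
    (hΦpos : ∀ n : ι → ℤ, (∀ k, 0 ≤ n k) → 0 < Φ n)
    (hΦz : ∀ n : ι → ℤ, (∃ k, n k < 0) → Φ n = 0) (m : ι → ℤ) (l : ι)
    (h : Φ (m + Pi.single l 1) = 0) : Φ m = 0 := by
  obtain ⟨k, hk⟩ : ∃ k, ¬ 0 ≤ (m + Pi.single l 1 : ι → ℤ) k :=
    not_forall.mp fun hnn => (hΦpos _ hnn).ne' h
  refine hΦz m ⟨k, ?_⟩
  have hsingle : (0 : ℤ) ≤ (Pi.single l 1 : ι → ℤ) k := by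
    rcases eq_or_ne k l with rfl | hkl <;> simp [*]
  simp only [Pi.add_apply] at hk
  omega

variable [Fintype ι]

theorem prod_zpow_add_single {G₀ : Type*} [CommGroupWithZero G₀] (ρ : ι → G₀) (m : ι → ℤ)
    {l : ι} (hl : ρ l ≠ 0) :
    ∏ i, ρ i ^ (m + Pi.single l 1 : ι → ℤ) i = (∏ i, ρ i ^ m i) * ρ l := by
  have hfactor : ∀ i,
      ρ i ^ (m + Pi.single l 1 : ι → ℤ) i = ρ i ^ m i * if i = l then ρ l else 1 := by
    intro i
    by_cases h : i = l
    · subst h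
      simp [zpow_add_one₀ hl]
    · simp [h]
  simp_rw [hfactor, prod_mul_distrib, prod_ite_eq']
  simp

noncomputable def whittleMeasure (a : ℝ) (Φ : (ι → ℤ) → ℝ) (ρ : ι → ℝ) (n : ι → ℤ) : ℝ :=
  a * Φ n * ∏ i, ρ i ^ n i

/-- `hΦ` takes care of the case `Φ (m + e_l) = 0`, where `Φ m / 0 = 0` is a junk value. -/
theorem whittleMeasure_add_single_mul_div {a : ℝ} {Φ : (ι → ℤ) → ℝ} {ρ : ι → ℝ}
    (m : ι → ℤ) {l : ι} (hρ : ρ l ≠ 0) (hΦ : Φ (m + Pi.single l 1) = 0 → Φ m = 0) :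
    whittleMeasure a Φ ρ (m + Pi.single l 1) * (Φ m / Φ (m + Pi.single l 1)) =
      whittleMeasure a Φ ρ m * ρ l := by
  unfold whittleMeasure
  rw [prod_zpow_add_single ρ m hρ]
  by_cases h : Φ (m + Pi.single l 1) = 0
  · simp [h, hΦ h]
  · field_simp

end ProductForm

section WhittleNetwork

variable {N : ℕ}

/-- Index `0` of `Fin (N + 1)` is the outside; queue `l : Fin N` has index `l.succ`. -/
def unitVec : Fin (N + 1) → Fin N → ℤ :=
  Fin.cases 0 fun l => Pi.single l 1

@[simp]
theorem unitVec_zero : unitVec (0 : Fin (N + 1)) = 0 := rfl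

@[simp]
theorem unitVec_succ (l : Fin N) : unitVec l.succ = Pi.single l 1 := rfl

noncomputable def whittleRate (ν : ℝ) (p : Fin (N + 1) → Fin (N + 1) → ℝ) (Φ : (Fin N → ℤ) → ℝ) :
    Fin (N + 1) → Fin (N + 1) → (Fin N → ℤ) → ℝ :=
  Fin.cases (fun j _ => ν * p 0 j) fun l j n => Φ (n - Pi.single l 1) / Φ n * p l.succ j

@[simp]
theorem whittleRate_zero (ν : ℝ) (p : Fin (N + 1) → Fin (N + 1) → ℝ) (Φ : (Fin N → ℤ) → ℝ)
    (j : Fin (N + 1)) (n : Fin N → ℤ) : whittleRate ν p Φ 0 j n = ν * p 0 j := rfl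

@[simp]
theorem whittleRate_succ (ν : ℝ) (p : Fin (N + 1) → Fin (N + 1) → ℝ) (Φ : (Fin N → ℤ) → ℝ)
    (l : Fin N) (j : Fin (N + 1)) (n : Fin N → ℤ) :
    whittleRate ν p Φ l.succ j n = Φ (n - Pi.single l 1) / Φ n * p l.succ j := rfl

variable {ν a : ℝ} {p : Fin (N + 1) → Fin (N + 1) → ℝ} {Φ : (Fin N → ℤ) → ℝ} {ρ : Fin N → ℝ}

theorem sum_whittleMeasure_mul_whittleRate (hρ : ∀ l, ρ l ≠ 0)
    (hΦ : ∀ m l, Φ (m + Pi.single l 1) = 0 → Φ m = 0) (m : Fin N → ℤ) (i : Fin (N + 1)) :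
    ∑ j, whittleMeasure a Φ ρ (m + unitVec j) * whittleRate ν p Φ j i (m + unitVec j) =
      whittleMeasure a Φ ρ m * (ν * p 0 i + ∑ l, ρ l * p l.succ i) := by
  have hinflow : ∀ l : Fin N, whittleMeasure a Φ ρ (m + Pi.single l 1) *
      whittleRate ν p Φ l.succ i (m + Pi.single l 1) =
        whittleMeasure a Φ ρ m * (ρ l * p l.succ i) := by
    intro l
    rw [whittleRate_succ, add_sub_cancel_right, ← mul_assoc,
      whittleMeasure_add_single_mul_div m (hρ l) (hΦ m l)]
    ring
  rw [Fin.sum_univ_succ]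
  simp only [unitVec_zero, unitVec_succ, add_zero, whittleRate_zero, hinflow, ← mul_sum]
  ring

/-- `n - unitVec i + unitVec j` is the paper's `T_{ij} n`. -/
theorem whittle_partial_balance (hst : ∀ i, ∑ j, p i j = 1) (hp00 : p 0 0 = 0)
    (hρ : ∀ l, ρ l ≠ 0) (hΦ : ∀ m l, Φ (m + Pi.single l 1) = 0 → Φ m = 0)
    (htr0 : ν = ∑ l, ρ l * p l.succ 0)
    (htr : ∀ k : Fin N, ρ k = ∑ l, ρ l * p l.succ k.succ + ν * p 0 k.succ)
    (n : Fin N → ℤ) (i : Fin (N + 1)) :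
    whittleMeasure a Φ ρ n * ∑ j, whittleRate ν p Φ i j n =
      ∑ j, whittleMeasure a Φ ρ (n - unitVec i + unitVec j) *
        whittleRate ν p Φ j i (n - unitVec i + unitVec j) := by
  rw [sum_whittleMeasure_mul_whittleRate hρ hΦ]
  cases i using Fin.cases with
  | zero =>
    simp only [whittleRate_zero, ← mul_sum, hst, hp00, unitVec_zero, sub_zero]
    rw [← htr0]
    ring
  | succ k =>
    obtain ⟨m, rfl⟩ : ∃ m, n = m + Pi.single k 1 := ⟨n - Pi.single k 1, by simp⟩
    simp only [whittleRate_succ, ← mul_sum, hst, mul_one, unitVec_succ, add_sub_cancel_right]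
    rw [whittleMeasure_add_single_mul_div m (hρ k) (hΦ m k), htr k]
    ring

end WhittleNetwork

theorem stmt8_general (N : ℕ) (ν : ℝ)
    (p : Fin (N + 1) → Fin (N + 1) → ℝ)
    (hst : ∀ i, ∑ j, p i j = 1) (hp00 : p 0 0 = 0)
    (Φ : (Fin N → ℤ) → ℝ)
    (hΦpos : ∀ n : Fin N → ℤ, (∀ k, 0 ≤ n k) → 0 < Φ n)
    (hΦz : ∀ n : Fin N → ℤ, (∃ k, n k < 0) → Φ n = 0)
    (e : Fin (N + 1) → (Fin N → ℤ))
    (he : ∀ i k, e i k = if (k : ℕ) + 1 = (i : ℕ) then 1 else 0)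
    (φ : Fin (N + 1) → Fin (N + 1) → (Fin N → ℤ) → ℝ)
    (hφ0 : ∀ j n, φ 0 j n = ν * p 0 j)
    (hφi : ∀ (i : Fin N) (j : Fin (N + 1)) (n : Fin N → ℤ),
      φ i.succ j n = Φ (n - e i.succ) / Φ n * p i.succ j)
    (ρ : Fin N → ℝ) (hρpos : ∀ i, 0 < ρ i)
    (htr0 : ν = ∑ j, ρ j * p j.succ 0)
    (htr : ∀ i : Fin N, ρ i = ∑ j, ρ j * p j.succ i.succ + ν * p 0 i.succ)
    (a : ℝ)
    (π : (Fin N → ℤ) → ℝ)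
    (hπ : ∀ n, π n = a * Φ n * ∏ i, ρ i ^ (n i)) :
    ∀ n : Fin N → ℤ, (∀ k, 0 ≤ n k) → ∀ i,
      π n * ∑ j, φ i j n = ∑ j, π (n - e i + e j) * φ j i (n - e i + e j) := by
  intro n _ i
  obtain rfl : e = unitVec := by
    funext i k
    rw [he]
    cases i using Fin.cases with
    | zero => simp
    | succ l => simp [Pi.single_apply, Fin.ext_iff]
  obtain rfl : φ = whittleRate ν p Φ := by
    funext i j n
    cases i using Fin.cases with
    | zero => exact hφ0 j n
    | succ l => exact hφi l j n
  obtain rfl : π = whittleMeasure a Φ ρ := funext hπ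
  exact whittle_partial_balance hst hp00 (fun l => (hρpos l).ne')
    (eq_zero_of_add_single_eq_zero Φ hΦpos hΦz) htr0 htr n i

/-- In a Whittle network with balance function `Φ` and routing matrix `p`, the distribution
`π n = a Φ(n) ∏_i ρ_i^{n_i}` satisfies the partial balance equations, where `ρ` is any
positive solution of the traffic equations. States are extended from `ℤ₊^N` to `ℤ^N`
with `Φ` vanishing at states with a negative coordinate (the convention `Φ(T_i n) = 0`
when `n_i = 0`); `e i` is the `i`-th unit vector (`e 0 = 0`). -/
theorem stmt8 (N : ℕ) (ν : ℝ) (hν : 0 ≤ ν)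
    (p : Fin (N + 1) → Fin (N + 1) → ℝ) (hp : ∀ i j, 0 ≤ p i j)
    (hst : ∀ i, ∑ j, p i j = 1) (hp00 : p 0 0 = 0)
    (Φ : (Fin N → ℤ) → ℝ)
    (hΦpos : ∀ n : Fin N → ℤ, (∀ k, 0 ≤ n k) → 0 < Φ n)
    (hΦz : ∀ n : Fin N → ℤ, (∃ k, n k < 0) → Φ n = 0)
    (e : Fin (N + 1) → (Fin N → ℤ))
    (he : ∀ i k, e i k = if (k : ℕ) + 1 = (i : ℕ) then 1 else 0)
    (φ : Fin (N + 1) → Fin (N + 1) → (Fin N → ℤ) → ℝ)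
    (hφ0 : ∀ j n, φ 0 j n = ν * p 0 j)
    (hφi : ∀ (i : Fin N) (j : Fin (N + 1)) (n : Fin N → ℤ),
      φ i.succ j n = Φ (n - e i.succ) / Φ n * p i.succ j)
    (ρ : Fin N → ℝ) (hρpos : ∀ i, 0 < ρ i)
    (htr0 : ν = ∑ j, ρ j * p j.succ 0)
    (htr : ∀ i : Fin N, ρ i = ∑ j, ρ j * p j.succ i.succ + ν * p 0 i.succ)
    (a : ℝ) (ha : 0 < a)
    (π : (Fin N → ℤ) → ℝ)
    (hπ : ∀ n, π n = a * Φ n * ∏ i, ρ i ^ (n i)) :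
    ∀ n : Fin N → ℤ, (∀ k, 0 ≤ n k) → ∀ i,
      π n * ∑ j, φ i j n = ∑ j, π (n - e i + e j) * φ j i (n - e i + e j) :=
  stmt8_general N ν p hst hp00 Φ hΦpos hΦz e he φ hφ0 hφi ρ hρpos htr0 htr a π hπ
end

section
/- For a processor-sharing Jackson network, i.e., a Whittle network with Φ(n) = ∏_{i=1}^N λ_i^{n_i} for positive constants λ_i, the distribution π(n) = a·∏_{i=1}^N (λ_i ρ_i)^{n_i} satisfies the partial balance equations, where ρ solves the traffic equations; π is a probability distribution provided λ_i ρ_i < 1 for all i, with a = ∏_i (1 - λ_i ρ_i). -/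
/-!
Write a state in which station `i` is busy as `x + e i`. The product form satisfies
`g (x + e j) = g x * w j`, and in `x + e j` station `j` is busy and works at rate `μ j`. Hence both
sides of the partial balance equation at `i` equal `g x` times the corresponding side of the traffic
equation `∑ j, w j * μ j * p j i = w i * μ i`, in which `w j * μ j = ρ j` (with `ρ 0 = ν`, index `0`
being the outside). If station `i` is empty, both sides vanish. The normalising constant is a
product of geometric series.
-/

open Finset
open scoped Classical

theorem hasSum_pi_prod_of_nonneg {κ : Type*} {N : ℕ} {f : Fin N → κ → ℝ} {s : Fin N → ℝ}
    (hf0 : ∀ i k, 0 ≤ f i k) (hf : ∀ i, HasSum (f i) (s i)) :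
    HasSum (fun n : Fin N → κ => ∏ i, f i (n i)) (∏ i, s i) := by
  induction N with
  | zero => simp only [univ_eq_empty, prod_empty]; exact hasSum_unique _
  | succ N ih =>
    have htail := ih (fun i => hf0 i.succ) (fun i => hf i.succ)
    have hsummable :
        Summable fun x : κ × (Fin N → κ) => f 0 x.1 * ∏ i : Fin N, f i.succ (x.2 i) := by
      apply (hf 0).summable.mul_of_nonneg htail.summable
      · exact hf0 0
      · exact fun n => prod_nonneg fun i _ => hf0 i.succ (n i)
    have hcons : (fun n => ∏ i, f i (n i)) ∘ Fin.consEquiv (fun _ => κ) =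
        fun x => f 0 x.1 * ∏ i : Fin N, f i.succ (x.2 i) := by
      ext x
      simp [Fin.prod_univ_succ]
    rw [← (Fin.consEquiv fun _ => κ).hasSum_iff, hcons, Fin.prod_univ_succ]
    have hprod := (hf 0).mul htail hsummable
    convert hprod using 1

theorem hasSum_prod_pow_of_lt_one {N : ℕ} {r : Fin N → ℝ} (h0 : ∀ i, 0 ≤ r i)
    (h1 : ∀ i, r i < 1) :
    HasSum (fun n : Fin N → ℕ => ∏ i, r i ^ n i) (∏ i, (1 - r i))⁻¹ := by
  rw [← prod_inv_distrib]
  exact hasSum_pi_prod_of_nonneg (fun i n => pow_nonneg (h0 i) n)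
    fun i => hasSum_geometric_of_lt_one (h0 i) (h1 i)

section PartialBalance

variable {V ι : Type*} [AddCommGroup V] [Fintype ι] {S : Set V} {e : ι → V} {g : V → ℝ}
  {w μ : ι → ℝ} {P : ι → ι → ℝ} {φ : ι → ι → V → ℝ}

theorem partialBalance_of_traffic (hS : ∀ x ∈ S, ∀ j, x + e j ∈ S)
    (hg : ∀ x ∈ S, ∀ j, g (x + e j) = g x * w j) (hP : ∀ i, ∑ j, P i j = 1)
    (htraffic : ∀ i, ∑ j, w j * μ j * P j i = w i * μ i)
    (hφ : ∀ m ∈ S, ∀ j i, φ j i m = if m - e j ∈ S then μ j * P j i else 0)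
    {n : V} (hn : n ∈ S) (i : ι) :
    S.indicator g n * ∑ j, φ i j n =
      ∑ j, S.indicator g (n - e i + e j) * φ j i (n - e i + e j) := by
  by_cases hi : n - e i ∈ S
  · obtain ⟨x, rfl⟩ : ∃ x, n = x + e i := ⟨n - e i, (sub_add_cancel n (e i)).symm⟩
    rw [add_sub_cancel_right] at hi ⊢
    have hterm : ∀ j, S.indicator g (x + e j) * φ j i (x + e j) = g x * (w j * μ j * P j i) := by
      intro j
      rw [Set.indicator_of_mem (hS x hi j), hφ _ (hS x hi j), add_sub_cancel_right, if_pos hi,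
        hg x hi]
      ring
    calc S.indicator g (x + e i) * ∑ j, φ i j (x + e i) = g x * (w i * μ i) := by
          simp only [Set.indicator_of_mem hn, hφ _ hn, add_sub_cancel_right, if_pos hi, ← mul_sum,
            hP, hg x hi]
          ring
      _ = ∑ j, S.indicator g (x + e j) * φ j i (x + e j) := by
          simp only [hterm, ← mul_sum, htraffic]
  · have hleft : ∀ j, φ i j n = 0 := fun j => by rw [hφ n hn, if_neg hi]
    have hright : ∀ j, S.indicator g (n - e i + e j) * φ j i (n - e i + e j) = 0 := by
      intro j
      by_cases hm : n - e i + e j ∈ S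
      · rw [hφ _ hm, add_sub_cancel_right, if_neg hi, mul_zero]
      · rw [Set.indicator_of_notMem hm, zero_mul]
    simp [hleft, hright]

end PartialBalance

def stationVec (N : ℕ) : Fin (N + 1) → Fin N → ℤ :=
  Fin.cons 0 fun k => Pi.single k 1

theorem eq_stationVec {N : ℕ} {e : Fin (N + 1) → Fin N → ℤ}
    (he : ∀ i k, e i k = if (k : ℕ) + 1 = (i : ℕ) then 1 else 0) : e = stationVec N := by
  funext i k
  rw [he]
  cases i using Fin.cases with
  | zero => simp [stationVec]
  | succ j => simp [stationVec, Pi.single_apply, Fin.ext_iff]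

theorem stationVec_nonneg {N : ℕ} (j : Fin (N + 1)) : 0 ≤ stationVec N j := by
  cases j using Fin.cases with
  | zero => simp [stationVec]
  | succ k => simp [stationVec]

theorem prod_zpow_stationVec {N : ℕ} (r : Fin N → ℝ) (j : Fin (N + 1)) :
    ∏ i, r i ^ stationVec N j i = (Fin.cons 1 r : Fin (N + 1) → ℝ) j := by
  cases j using Fin.cases with
  | zero => simp [stationVec]
  | succ k => simp [stationVec, Pi.single_apply]

theorem prod_zpow_add {ι : Type*} [Fintype ι] {r : ι → ℝ} (hr : ∀ i, r i ≠ 0) (x y : ι → ℤ) :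
    ∏ i, r i ^ (x + y) i = (∏ i, r i ^ x i) * ∏ i, r i ^ y i := by
  simp only [Pi.add_apply, zpow_add₀ (hr _), prod_mul_distrib]

theorem nonneg_sub_single_iff {ι : Type*} [DecidableEq ι] {m : ι → ℤ} (hm : 0 ≤ m) (k : ι) :
    0 ≤ m - Pi.single k 1 ↔ 1 ≤ m k := by
  refine ⟨fun h => by simpa using h k, fun h t => ?_⟩
  rcases eq_or_ne t k with rfl | htk
  · simpa using h
  · simpa [htk] using hm t

theorem sum_cons_mul_eq_cons {N : ℕ} {ν : ℝ} {p : Fin (N + 1) → Fin (N + 1) → ℝ}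
    {ρ : Fin N → ℝ} (hp00 : p 0 0 = 0) (htr0 : ν = ∑ j, ρ j * p j.succ 0)
    (htr : ∀ i : Fin N, ρ i = ∑ j, ρ j * p j.succ i.succ + ν * p 0 i.succ) (i : Fin (N + 1)) :
    ∑ j, (Fin.cons ν ρ : Fin (N + 1) → ℝ) j * p j i = (Fin.cons ν ρ : Fin (N + 1) → ℝ) i := by
  rw [Fin.sum_univ_succ]
  cases i using Fin.cases with
  | zero => simp [hp00, htr0]
  | succ k => simp [htr k, add_comm]

theorem whittleRate_eq_ite {N : ℕ} {ν : ℝ} {p : Fin (N + 1) → Fin (N + 1) → ℝ} {lam : Fin N → ℝ}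
    {φ : Fin (N + 1) → Fin (N + 1) → (Fin N → ℤ) → ℝ} (hφ0 : ∀ j n, φ 0 j n = ν * p 0 j)
    (hφi : ∀ (i : Fin N) (j : Fin (N + 1)) (n : Fin N → ℤ),
      φ i.succ j n = if 1 ≤ n i then (lam i)⁻¹ * p i.succ j else 0)
    (m : Fin N → ℤ) (hm : m ∈ Set.Ici 0) (j i : Fin (N + 1)) :
    φ j i m = if m - stationVec N j ∈ Set.Ici 0 then
      (Fin.cons ν fun k => (lam k)⁻¹ : Fin (N + 1) → ℝ) j * p j i else 0 := by
  cases j using Fin.cases with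
  | zero => simp [hφ0, stationVec, hm]
  | succ k => simp [hφi, stationVec, nonneg_sub_single_iff hm]

theorem cons_mul_cons_inv_eq_cons {N : ℕ} {ν : ℝ} {lam ρ : Fin N → ℝ} (hlam : ∀ k, lam k ≠ 0)
    (j : Fin (N + 1)) :
    (Fin.cons 1 fun k => lam k * ρ k : Fin (N + 1) → ℝ) j *
      (Fin.cons ν fun k => (lam k)⁻¹ : Fin (N + 1) → ℝ) j = (Fin.cons ν ρ : Fin (N + 1) → ℝ) j := by
  cases j using Fin.cases with
  | zero => simp
  | succ k =>
    simp only [Fin.cons_succ]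
    field_simp [hlam k]

theorem stmt10_general (N : ℕ) (ν : ℝ)
    (p : Fin (N + 1) → Fin (N + 1) → ℝ)
    (hst : ∀ i, ∑ j, p i j = 1) (hp00 : p 0 0 = 0)
    (lam : Fin N → ℝ) (hlam : ∀ i, 0 < lam i)
    (e : Fin (N + 1) → (Fin N → ℤ))
    (he : ∀ i k, e i k = if (k : ℕ) + 1 = (i : ℕ) then 1 else 0)
    (φ : Fin (N + 1) → Fin (N + 1) → (Fin N → ℤ) → ℝ)
    (hφ0 : ∀ j n, φ 0 j n = ν * p 0 j)
    (hφi : ∀ (i : Fin N) (j : Fin (N + 1)) (n : Fin N → ℤ),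
      φ i.succ j n = if 1 ≤ n i then (lam i)⁻¹ * p i.succ j else 0)
    (ρ : Fin N → ℝ) (hρpos : ∀ i, 0 < ρ i)
    (htr0 : ν = ∑ j, ρ j * p j.succ 0)
    (htr : ∀ i : Fin N, ρ i = ∑ j, ρ j * p j.succ i.succ + ν * p 0 i.succ)
    (hsub : ∀ i, lam i * ρ i < 1)
    (a : ℝ) (ha : a = ∏ i, (1 - lam i * ρ i))
    (π : (Fin N → ℤ) → ℝ)
    (hπ : ∀ n, π n = if ∀ k, 0 ≤ n k then a * ∏ i, (lam i * ρ i) ^ (n i) else 0) :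
    (∀ n : Fin N → ℤ, (∀ k, 0 ≤ n k) → ∀ i,
      π n * ∑ j, φ i j n = ∑ j, π (n - e i + e j) * φ j i (n - e i + e j)) ∧
      HasSum (fun n : Fin N → ℕ => a * ∏ i, (lam i * ρ i) ^ (n i)) 1 := by
  have hr : ∀ i, 0 < lam i * ρ i := fun i => mul_pos (hlam i) (hρpos i)
  refine ⟨fun n hn i => ?_, ?_⟩
  · obtain rfl := eq_stationVec he
    obtain rfl : π = (Set.Ici 0).indicator fun n => a * ∏ i, (lam i * ρ i) ^ n i := by
      funext n
      simp [hπ, Set.indicator, Pi.le_def]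
    refine partialBalance_of_traffic (w := Fin.cons 1 fun i => lam i * ρ i)
      (fun x hx j => add_nonneg hx (stationVec_nonneg j)) (fun x _ j => ?_) hst (fun i => ?_)
      (whittleRate_eq_ite hφ0 hφi) hn i
    · rw [prod_zpow_add (fun i => (hr i).ne'), prod_zpow_stationVec, mul_assoc]
    · simp only [cons_mul_cons_inv_eq_cons fun k => (hlam k).ne',
        sum_cons_mul_eq_cons hp00 htr0 htr]
  · subst ha
    have hsum := (hasSum_prod_pow_of_lt_one (fun i => (hr i).le) hsub).mul_left
      (∏ i, (1 - lam i * ρ i))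
    rwa [mul_inv_cancel₀ (prod_ne_zero_iff.2 fun i _ => (sub_pos.2 (hsub i)).ne')] at hsum

/-- Processor-sharing Jackson network (Whittle network with `Φ(n) = ∏ λ_i^{n_i}`):
`π n = a ∏_i (λ_i ρ_i)^{n_i}` satisfies the partial balance equations, and, when
`λ_i ρ_i < 1` for all `i` and `a = ∏_i (1 - λ_i ρ_i)`, `π` is a probability
distribution on `ℤ₊^N`. -/
theorem stmt10 (N : ℕ) (ν : ℝ) (hν : 0 ≤ ν)
    (p : Fin (N + 1) → Fin (N + 1) → ℝ) (hp : ∀ i j, 0 ≤ p i j)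
    (hst : ∀ i, ∑ j, p i j = 1) (hp00 : p 0 0 = 0)
    (lam : Fin N → ℝ) (hlam : ∀ i, 0 < lam i)
    (e : Fin (N + 1) → (Fin N → ℤ))
    (he : ∀ i k, e i k = if (k : ℕ) + 1 = (i : ℕ) then 1 else 0)
    (φ : Fin (N + 1) → Fin (N + 1) → (Fin N → ℤ) → ℝ)
    (hφ0 : ∀ j n, φ 0 j n = ν * p 0 j)
    (hφi : ∀ (i : Fin N) (j : Fin (N + 1)) (n : Fin N → ℤ),
      φ i.succ j n = if 1 ≤ n i then (lam i)⁻¹ * p i.succ j else 0)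
    (ρ : Fin N → ℝ) (hρpos : ∀ i, 0 < ρ i)
    (htr0 : ν = ∑ j, ρ j * p j.succ 0)
    (htr : ∀ i : Fin N, ρ i = ∑ j, ρ j * p j.succ i.succ + ν * p 0 i.succ)
    (hsub : ∀ i, lam i * ρ i < 1)
    (a : ℝ) (ha : a = ∏ i, (1 - lam i * ρ i))
    (π : (Fin N → ℤ) → ℝ)
    (hπ : ∀ n, π n = if ∀ k, 0 ≤ n k then a * ∏ i, (lam i * ρ i) ^ (n i) else 0) :
    (∀ n : Fin N → ℤ, (∀ k, 0 ≤ n k) → ∀ i,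
      π n * ∑ j, φ i j n = ∑ j, π (n - e i + e j) * φ j i (n - e i + e j)) ∧
      HasSum (fun n : Fin N → ℕ => a * ∏ i, (lam i * ρ i) ^ (n i)) 1 :=
  stmt10_general N ν p hst hp00 lam hlam e he φ hφ0 hφi ρ hρpos htr0 htr hsub a ha π hπ
end

section
/- Let μ be a probability measure on ℝ₊ with distribution function F, mean 1, and μ({0}) = 0. Then the probability that two or more events of a stationary renewal process with inter-event distribution μ occur in [0,h] is o(h) as h → 0. Specifically, this probability is at most ∫₀^h F(h - y)(1 - F(y))dy ≤ h·F(h), which is o(h) since F(h) → 0 as h → 0. -/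
/-!
Writing `T 1 = Y 0 + Y 1` with `Y 0 ∼ μ*` independent of `Y 1 ∼ μ`, Fubini gives
`P(T 1 ≤ h) = ∫ μ(Iic (h - y)) dμ*(y) = ∫₀^h F(h - y)(1 - F y) dy`, the integrand vanishing
outside `[0, h]` because `μ` lives on `[0, ∞)`. Bounding `F (h - y) ≤ F h` and `1 - F y ≤ 1`
gives `h F(h)`, and `F(h) → F(0) = μ(Iic 0) = 0` by right continuity, since `μ` has no atom at `0`.
-/

open MeasureTheory Set Filter Topology ProbabilityTheory

lemma measure_add_le_eq_lintegral {Ω : Type*} [MeasurableSpace Ω] {P : Measure Ω}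
    [IsFiniteMeasure P] {X Y : Ω → ℝ} (hX : Measurable X) (hY : Measurable Y)
    (hXY : IndepFun X Y P) (h : ℝ) :
    P {ω | X ω + Y ω ≤ h} = ∫⁻ x, P.map Y (Iic (h - x)) ∂P.map X := by
  have hs : MeasurableSet {p : ℝ × ℝ | p.1 + p.2 ≤ h} :=
    measurableSet_le (measurable_fst.add measurable_snd) measurable_const
  have hmap := (indepFun_iff_map_prod_eq_prod_map_map hX.aemeasurable hY.aemeasurable).mp hXY
  calc P {ω | X ω + Y ω ≤ h} = P.map (fun ω => (X ω, Y ω)) {p : ℝ × ℝ | p.1 + p.2 ≤ h} :=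
        (Measure.map_apply (hX.prodMk hY) hs).symm
    _ = ∫⁻ x, P.map Y (Prod.mk x ⁻¹' {p : ℝ × ℝ | p.1 + p.2 ≤ h}) ∂P.map X := by
        rw [hmap, Measure.prod_apply hs]
    _ = ∫⁻ x, P.map Y (Iic (h - x)) ∂P.map X :=
        lintegral_congr fun x => congrArg _ (Set.ext fun y => by simp [le_sub_iff_add_le'])

section cdf

variable {μ : Measure ℝ}

lemma cdf_eq_zero_of_neg [IsProbabilityMeasure μ] (hsupp : μ (Iio 0) = 0) {x : ℝ} (hx : x < 0) :
    cdf μ x = 0 := by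
  rw [cdf_eq_real, measureReal_def, measure_mono_null (Iic_subset_Iio.mpr hx) hsupp,
    ENNReal.toReal_zero]

lemma cdf_zero_eq_zero [IsProbabilityMeasure μ] (hsupp : μ (Iio 0) = 0) (hatom : μ {0} = 0) :
    cdf μ 0 = 0 := by
  rw [cdf_eq_real, measureReal_def, ← Iio_union_right, measure_union_null hsupp hatom,
    ENNReal.toReal_zero]

lemma tendsto_cdf_nhdsGT (x : ℝ) : Tendsto (cdf μ) (𝓝[>] x) (𝓝 (cdf μ x)) :=
  ((cdf μ).right_continuous x).tendsto.mono_left (nhdsWithin_mono x Ioi_subset_Ici_self)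

lemma integrableOn_cdf_sub_mul_one_sub_cdf (h : ℝ) :
    IntegrableOn (fun y => cdf μ (h - y) * (1 - cdf μ y)) (Icc 0 h) := by
  refine IntegrableOn.of_bound measure_Icc_lt_top ?_ 1 (ae_of_all _ fun y => ?_)
  · exact (((monotone_cdf μ).measurable.comp (measurable_const.sub measurable_id)).mul
      (measurable_const.sub (monotone_cdf μ).measurable)).aestronglyMeasurable
  · rw [Real.norm_eq_abs, abs_le]
    have := cdf_nonneg μ (h - y); have := cdf_le_one μ (h - y)
    have := cdf_nonneg μ y; have := cdf_le_one μ y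
    constructor <;> nlinarith

lemma lintegral_measure_Iic_sub_stationary [IsProbabilityMeasure μ] (hsupp : μ (Iio 0) = 0)
    (h : ℝ) :
    ∫⁻ y, μ (Iic (h - y)) ∂volume.withDensity
        (fun y => ENNReal.ofReal (if 0 ≤ y then 1 - cdf μ y else 0)) =
      ENNReal.ofReal (∫ y in Icc 0 h, cdf μ (h - y) * (1 - cdf μ y)) := by
  have hcdf := (monotone_cdf μ).measurable
  have hdensity : Measurable fun y : ℝ => ENNReal.ofReal (if 0 ≤ y then 1 - cdf μ y else 0) :=
    ENNReal.measurable_ofReal.comp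
      (Measurable.ite measurableSet_Ici (measurable_const.sub hcdf) measurable_const)
  have hIic : Measurable fun y => μ (Iic (h - y)) := by
    simp only [← ofReal_cdf]
    exact ENNReal.measurable_ofReal.comp (hcdf.comp (measurable_const.sub measurable_id))
  have hindicator : ∀ y, ENNReal.ofReal (if 0 ≤ y then 1 - cdf μ y else 0) * μ (Iic (h - y)) =
      (Icc 0 h).indicator (fun y => ENNReal.ofReal (cdf μ (h - y) * (1 - cdf μ y))) y := by
    intro y
    rcases lt_or_ge y 0 with hy | hy
    · simp [hy.not_ge]
    rcases le_or_gt y h with hyh | hyh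
    · rw [if_pos hy, indicator_of_mem (show y ∈ Icc 0 h from ⟨hy, hyh⟩), ← ofReal_cdf,
        ← ENNReal.ofReal_mul (by linarith [cdf_le_one μ y]), mul_comm]
    · rw [indicator_of_notMem fun hmem => hyh.not_ge hmem.2, ← ofReal_cdf,
        cdf_eq_zero_of_neg hsupp (x := h - y) (by linarith), ENNReal.ofReal_zero, mul_zero]
  rw [lintegral_withDensity_eq_lintegral_mul _ hdensity hIic, ofReal_integral_eq_lintegral_ofReal
    (integrableOn_cdf_sub_mul_one_sub_cdf h) (ae_of_all _ fun y =>
      mul_nonneg (cdf_nonneg μ _) (sub_nonneg.mpr (cdf_le_one μ y))),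
    ← lintegral_indicator measurableSet_Icc]
  exact lintegral_congr hindicator

lemma integral_cdf_sub_mul_one_sub_cdf_le {h : ℝ} (hh : 0 ≤ h) :
    ∫ y in Icc 0 h, cdf μ (h - y) * (1 - cdf μ y) ≤ h * cdf μ h := by
  have hle : ∀ y ∈ Icc 0 h, cdf μ (h - y) * (1 - cdf μ y) ≤ cdf μ h := fun y hy => by
    have := monotone_cdf μ (show h - y ≤ h by linarith [hy.1])
    have := cdf_nonneg μ (h - y); have := cdf_nonneg μ y
    nlinarith
  calc ∫ y in Icc 0 h, cdf μ (h - y) * (1 - cdf μ y)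
      ≤ ∫ _ in Icc 0 h, cdf μ h :=
        setIntegral_mono_on (integrableOn_cdf_sub_mul_one_sub_cdf h)
          (integrableOn_const measure_Icc_lt_top.ne) measurableSet_Icc hle
    _ = h * cdf μ h := by
        rw [setIntegral_const, smul_eq_mul, measureReal_def, Real.volume_Icc, sub_zero,
          ENNReal.toReal_ofReal hh]

end cdf

theorem stmt15_general (Ω : Type*) [MeasurableSpace Ω] (P : Measure Ω) [IsProbabilityMeasure P]
    (μ μstar : Measure ℝ) [IsProbabilityMeasure μ]
    (hsupp : μ (Iio 0) = 0) (hatom : μ {0} = 0)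
    (F : ℝ → ℝ) (hF : ∀ x, F x = (μ (Iic x)).toReal)
    (hstar : μstar = volume.withDensity
      (fun y => ENNReal.ofReal (if 0 ≤ y then 1 - F y else 0)))
    (Y : ℕ → Ω → ℝ) (hmeas : ∀ m, Measurable (Y m))
    (hY0 : Measure.map (Y 0) P = μstar)
    (hYm : ∀ m, Measure.map (Y (m + 1)) P = μ)
    (hindep : ProbabilityTheory.iIndepFun Y P)
    (T : ℕ → Ω → ℝ) (hT : ∀ m ω, T m ω = ∑ k ∈ Finset.range (m + 1), Y k ω) :
    (∀ h : ℝ, 0 ≤ h →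
        P {ω | T 1 ω ≤ h} ≤ ENNReal.ofReal (∫ y in Icc 0 h, F (h - y) * (1 - F y))) ∧
      (∀ h : ℝ, 0 ≤ h →
        ENNReal.ofReal (∫ y in Icc 0 h, F (h - y) * (1 - F y)) ≤ ENNReal.ofReal (h * F h)) ∧
      Tendsto (fun h : ℝ => (P {ω | T 1 ω ≤ h}).toReal / h) (𝓝[>] 0) (𝓝 0) := by
  obtain rfl : F = cdf μ := funext fun x => by rw [hF, cdf_eq_real, measureReal_def]
  subst hstar
  have hlaw : ∀ h, P {ω | T 1 ω ≤ h} =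
      ENNReal.ofReal (∫ y in Icc 0 h, cdf μ (h - y) * (1 - cdf μ y)) := fun h => by
    have hT1 : {ω | T 1 ω ≤ h} = {ω | Y 0 ω + Y 1 ω ≤ h} := by
      simp [hT, Finset.sum_range_succ]
    rw [hT1, measure_add_le_eq_lintegral (hmeas 0) (hmeas 1) (hindep.indepFun zero_ne_one),
      hY0, hYm 0, lintegral_measure_Iic_sub_stationary hsupp]
  refine ⟨fun h _ => (hlaw h).le,
    fun h hh => ENNReal.ofReal_le_ofReal (integral_cdf_sub_mul_one_sub_cdf_le hh), ?_⟩
  have hcdf : Tendsto (cdf μ) (𝓝[>] 0) (𝓝 0) := by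
    simpa only [cdf_zero_eq_zero hsupp hatom] using tendsto_cdf_nhdsGT (μ := μ) 0
  refine squeeze_zero' ?_ ?_ hcdf
  · filter_upwards [self_mem_nhdsWithin] with h hh using div_nonneg ENNReal.toReal_nonneg hh.le
  · filter_upwards [self_mem_nhdsWithin] with h (hh : 0 < h)
    have hnonneg : 0 ≤ ∫ y in Icc 0 h, cdf μ (h - y) * (1 - cdf μ y) :=
      setIntegral_nonneg measurableSet_Icc fun y _ =>
        mul_nonneg (cdf_nonneg μ _) (sub_nonneg.mpr (cdf_le_one μ y))
    rw [div_le_iff₀' hh, hlaw, ENNReal.toReal_ofReal hnonneg]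
    exact integral_cdf_sub_mul_one_sub_cdf_le hh.le

/-- For a stationary renewal process with inter-event distribution `μ` (distribution
function `F`, mean 1, `μ {0} = 0`), the probability that two or more events occur in
`[0,h]` (i.e. that the second event time `T 1` is at most `h`) is at most
`∫₀^h F(h-y)(1-F(y)) dy ≤ h F(h)`, and is `o(h)` as `h → 0`. -/
theorem stmt15 (Ω : Type*) [MeasurableSpace Ω] (P : Measure Ω) [IsProbabilityMeasure P]
    (μ μstar : Measure ℝ) [IsProbabilityMeasure μ]
    (hsupp : μ (Iio 0) = 0) (hatom : μ {0} = 0)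
    (F : ℝ → ℝ) (hF : ∀ x, F x = (μ (Iic x)).toReal)
    (hmean : ∫ x, x ∂μ = 1)
    (hstar : μstar = volume.withDensity
      (fun y => ENNReal.ofReal (if 0 ≤ y then 1 - F y else 0)))
    (Y : ℕ → Ω → ℝ) (hmeas : ∀ m, Measurable (Y m))
    (hY0 : Measure.map (Y 0) P = μstar)
    (hYm : ∀ m, Measure.map (Y (m + 1)) P = μ)
    (hindep : ProbabilityTheory.iIndepFun Y P)
    (T : ℕ → Ω → ℝ) (hT : ∀ m ω, T m ω = ∑ k ∈ Finset.range (m + 1), Y k ω) :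
    (∀ h : ℝ, 0 ≤ h →
        P {ω | T 1 ω ≤ h} ≤ ENNReal.ofReal (∫ y in Icc 0 h, F (h - y) * (1 - F y))) ∧
      (∀ h : ℝ, 0 ≤ h →
        ENNReal.ofReal (∫ y in Icc 0 h, F (h - y) * (1 - F y)) ≤ ENNReal.ofReal (h * F h)) ∧
      Tendsto (fun h : ℝ => (P {ω | T 1 ω ≤ h}).toReal / h) (𝓝[>] 0) (𝓝 0) :=
  stmt15_general Ω P μ μstar hsupp hatom F hF hstar Y hmeas hY0 hYm hindep T hT
end

section
/- Let I' = {0,1,...,N} and suppose π : ℤ₊^N → ℝ₊ satisfies the partial balance equations π(n)Σ_{j∈I'}φ_{ij}(n) = Σ_{j∈I'}π(T_{ij}n)φ_{ji}(T_{ij}n) for all n and all i ∈ I'. Then for any bounded family of real numbers (g_i(n))_{i∈I', n∈ℤ₊^N}, Σ_n Σ_{i,j∈I'} π(n)φ_{ij}(n)·(g_j(T_{ij}n) - g_i(n)) = 0, provided Σ_n π(n)Σ_{i,j}φ_{ij}(n) < ∞. -/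
/-- The key algebraic identity for stationarity in multi-class networks: if `π` satisfies
the partial balance equations, then for any bounded family `g_i(n)`,
`Σ_n Σ_{i,j} π(n) φ_{ij}(n) (g_j(T_{ij} n) - g_i(n)) = 0`, provided
`Σ_n π(n) Σ_{i,j} φ_{ij}(n) < ∞`. -/
theorem stmt16 (N : ℕ) (φ : Fin (N + 1) → Fin (N + 1) → (Fin N → ℤ) → ℝ)
    (π : (Fin N → ℤ) → ℝ) (e : Fin (N + 1) → (Fin N → ℤ))
    (he : ∀ i k, e i k = if (k : ℕ) + 1 = (i : ℕ) then 1 else 0)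
    (hφ : ∀ i j n, 0 ≤ φ i j n) (hφ00 : ∀ n, φ 0 0 n = 0)
    (hφz : ∀ i j n, (∃ k, e i k = 1 ∧ n k = 0) → φ i j n = 0)
    (hπ : ∀ n, 0 ≤ π n) (hπz : ∀ n, (∃ k, n k < 0) → π n = 0)
    (hpb : ∀ n : Fin N → ℤ, (∀ k, 0 ≤ n k) → ∀ i,
      π n * ∑ j, φ i j n = ∑ j, π (n - e i + e j) * φ j i (n - e i + e j))
    (g : Fin (N + 1) → (Fin N → ℤ) → ℝ) (hg : ∃ M, ∀ i n, |g i n| ≤ M)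
    (hsum : Summable (fun n : Fin N → ℤ => π n * ∑ i, ∑ j, φ i j n)) :
    ∑' n : Fin N → ℤ,
      ∑ i, ∑ j, π n * φ i j n * (g j (n - e i + e j) - g i n) = 0 := by
  obtain ⟨M, hM⟩ := hg
  have hM0 : 0 ≤ M := le_trans (abs_nonneg _) (hM 0 0)
  -- e values are 0 or 1
  have he01 : ∀ i k, e i k = 0 ∨ e i k = 1 := by
    intro i k; rw [he]; split <;> simp
  -- key extended partial balance
  have hkey : ∀ (m : Fin N → ℤ) (j),
      ∑ i, π (m + e i - e j) * φ i j (m + e i - e j) = π m * ∑ i, φ j i m := by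
    intro m j
    by_cases hm : ∀ k, 0 ≤ m k
    · rw [hpb m hm j]
      refine Finset.sum_congr rfl fun i _ => ?_
      have hmm : m + e i - e j = m - e j + e i := by ring
      rw [hmm]
    · push_neg at hm
      obtain ⟨k, hk⟩ := hm
      rw [hπz m ⟨k, hk⟩, zero_mul]
      refine Finset.sum_eq_zero fun i _ => ?_
      set m' := m + e i - e j with hm'
      by_cases hneg : ∀ k', 0 ≤ m' k'
      · have hk' : m' k = m k + e i k - e j k := rfl
        have h1 : (0:ℤ) ≤ m k + e i k - e j k := hk' ▸ hneg k
        have hei : e i k = 1 := by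
          rcases he01 i k with h | h
          · exfalso; rcases he01 j k with h2 | h2 <;> omega
          · exact h
        have hej : e j k = 0 := by
          rcases he01 j k with h | h
          · exact h
          · exfalso; omega
        have hz : m' k = 0 := by
          have := hneg k
          omega
        rw [hφz i j m' ⟨k, hei, hz⟩, mul_zero]
      · push_neg at hneg
        obtain ⟨k', hk'⟩ := hneg
        rw [hπz m' ⟨k', hk'⟩, zero_mul]
  -- summability facts
  have hSij : ∀ i j, Summable (fun n => π n * φ i j n) := by
    intro i j
    refine hsum.of_nonneg_of_le (fun n => mul_nonneg (hπ n) (hφ i j n)) (fun n => ?_)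
    refine mul_le_mul_of_nonneg_left ?_ (hπ n)
    calc φ i j n ≤ ∑ j', φ i j' n :=
          Finset.single_le_sum (fun j' _ => hφ i j' n) (Finset.mem_univ j)
      _ ≤ ∑ i', ∑ j', φ i' j' n :=
          Finset.single_le_sum
            (fun i' _ => Finset.sum_nonneg fun j' _ => hφ i' j' n) (Finset.mem_univ i)
  have hSb : ∀ i j (c : (Fin N → ℤ) → ℝ), (∀ n, |c n| ≤ M) →
      Summable (fun n => π n * φ i j n * c n) := by
    intro i j c hc
    have h1 : Summable (fun n => π n * φ i j n * M) := (hSij i j).mul_right M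
    refine Summable.of_abs (h1.of_nonneg_of_le (fun n => abs_nonneg _) fun n => ?_)
    rw [abs_mul, abs_of_nonneg (mul_nonneg (hπ n) (hφ i j n))]
    exact mul_le_mul_of_nonneg_left (hc n) (mul_nonneg (hπ n) (hφ i j n))
  set A : Fin (N+1) → Fin (N+1) → (Fin N → ℤ) → ℝ :=
    fun i j n => π n * φ i j n * g j (n - e i + e j) with hA_def
  set B : Fin (N+1) → Fin (N+1) → (Fin N → ℤ) → ℝ :=
    fun i j n => π n * φ i j n * g i n with hB_def
  have hA : ∀ i j, Summable (A i j) := fun i j => hSb i j _ (fun n => hM j _)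
  have hB : ∀ i j, Summable (B i j) := fun i j => hSb i j _ (fun n => hM i _)
  have hterm : ∀ n, (∑ i, ∑ j, π n * φ i j n * (g j (n - e i + e j) - g i n))
      = (∑ i, ∑ j, A i j n) - (∑ i, ∑ j, B i j n) := by
    intro n
    rw [← Finset.sum_sub_distrib]
    refine Finset.sum_congr rfl fun i _ => ?_
    rw [← Finset.sum_sub_distrib]
    refine Finset.sum_congr rfl fun j _ => ?_
    simp [hA_def, hB_def, mul_sub]
  have hSA : Summable (fun n => ∑ i, ∑ j, A i j n) :=
    summable_sum fun i _ => summable_sum fun j _ => hA i j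
  have hSB : Summable (fun n => ∑ i, ∑ j, B i j n) :=
    summable_sum fun i _ => summable_sum fun j _ => hB i j
  calc ∑' n : Fin N → ℤ,
      ∑ i, ∑ j, π n * φ i j n * (g j (n - e i + e j) - g i n)
      = (∑' n, ∑ i, ∑ j, A i j n) - ∑' n, ∑ i, ∑ j, B i j n := by
        rw [← Summable.tsum_sub hSA hSB]
        exact tsum_congr hterm
    _ = 0 := by
        rw [sub_eq_zero]
        -- compute each side
        have hAeq : (∑' n, ∑ i, ∑ j, A i j n)
            = ∑ j, ∑' m : Fin N → ℤ, π m * (∑ i, φ j i m) * g j m := by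
          rw [Summable.tsum_finsetSum (fun i _ => summable_sum fun j _ => hA i j)]
          have h1 : ∀ i, (∑' n, ∑ j, A i j n) = ∑ j, ∑' n, A i j n :=
            fun i => Summable.tsum_finsetSum (fun j _ => hA i j)
          simp_rw [h1]
          rw [Finset.sum_comm]
          refine Finset.sum_congr rfl fun j _ => ?_
          -- change of variables in each inner tsum, then sum over i inside
          have h2 : ∀ i, (∑' n, A i j n)
              = ∑' m : Fin N → ℤ, π (m + e i - e j) * φ i j (m + e i - e j) * g j m := by
            intro i
            rw [← (Equiv.subRight (e j - e i)).tsum_eq (A i j)]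
            refine tsum_congr fun m => ?_
            have hm1 : (Equiv.subRight (e j - e i)) m = m + e i - e j := by
              simp [Equiv.subRight]; ring
            have hm2 : (m + e i - e j) - e i + e j = m := by ring
            rw [hm1, hA_def]
            simp only [hm2]
          simp_rw [h2]
          have hs : ∀ i, Summable
              (fun m : Fin N → ℤ => π (m + e i - e j) * φ i j (m + e i - e j) * g j m) := by
            intro i
            have := (hA i j).comp_injective (Equiv.subRight (e j - e i)).injective
            refine this.congr fun m => ?_
            have hm1 : (Equiv.subRight (e j - e i)) m = m + e i - e j := by
              simp [Equiv.subRight]; ring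
            have hm2 : (m + e i - e j) - e i + e j = m := by ring
            simp only [Function.comp, hm1, hA_def, hm2]
          rw [← Summable.tsum_finsetSum (fun i _ => hs i)]
          refine tsum_congr fun m => ?_
          rw [← Finset.sum_mul, hkey m j]
        have hBeq : (∑' n, ∑ i, ∑ j, B i j n)
            = ∑ i, ∑' m : Fin N → ℤ, π m * (∑ j, φ i j m) * g i m := by
          rw [Summable.tsum_finsetSum (fun i _ => summable_sum fun j _ => hB i j)]
          refine Finset.sum_congr rfl fun i _ => ?_
          rw [Summable.tsum_finsetSum (fun j _ => hB i j), ← Summable.tsum_finsetSum (fun j _ => hB i j)]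
          refine tsum_congr fun m => ?_
          simp only [hB_def]
          rw [Finset.mul_sum, ← Finset.sum_mul]
        rw [hAeq, hBeq]
end
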